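/- Let d_k have density f_{d_k}(x) = 2k·C(K,k)·Σ_{j=0}^{K−k} C(K−k,j)(−1)^j x^{2(k+j)−1}/D^{2(k+j)} on [0,D], and conditionally on d_k = x let α_k be exponentially distributed with mean x^{−η}. Then for z > 0, P(α_k ≤ z) = 1 − 2k·C(K,k)·Σ_{j=0}^{K−k} C(K−k,j)·((−1)^j / D^{2(k+j)})·(z^{−2(k+j)/η}/η)·γ(2(k+j)/η, z D^η). -/

import Mathlib

/-!
Conditionally on `d = x`, the event `α > z` is `e > z x^η`, which has probability `exp (-z x^η)`
by independence; hence `P(α > z) = ∫₀^D f_d(x) exp (-z x^η) dx`. Expanding `f_d` termwise leaves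
the moments `∫₀^D x^q exp (-z x^η) dx`, which the substitution `u = z x^η` turns into values of
the lower incomplete gamma function.
-/

open MeasureTheory ProbabilityTheory Set Real

noncomputable def lowerGamma (a b : ℝ) : ℝ :=
  ∫ t in (0:ℝ)..b, t ^ (a - 1) * Real.exp (-t)

theorem intervalIntegral.integral_rpow_mul_exp_neg_mul_rpow {p q b D : ℝ} (hp : 0 < p)
    (hb : 0 < b) (hD : 0 ≤ D) :
    ∫ x in (0:ℝ)..D, x ^ q * exp (-b * x ^ p) =
      b ^ (-(q + 1) / p) * (1 / p) * lowerGamma ((q + 1) / p) (b * D ^ p) := by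
  set f : ℝ → ℝ := fun x => b * x ^ p
  set g : ℝ → ℝ := fun u => u ^ ((q + 1) / p - 1) * exp (-u)
  have hsubst : ∀ x, 0 < x → x ^ q * exp (-b * x ^ p) =
      b ^ (-(q + 1) / p) * (1 / p) * ((g ∘ f) x * (b * (p * x ^ (p - 1)))) := by
    intro x hx
    have hxp : 0 < x ^ p := rpow_pos_of_pos hx p
    have hexponent : p * ((q + 1) / p - 1) = q + 1 - p := by field_simp
    simp only [f, g, Function.comp, mul_rpow hb.le hxp.le, ← rpow_mul hx.le, hexponent,
      rpow_sub hb, rpow_sub hx, rpow_add hx, rpow_one, neg_div,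
      rpow_neg hb.le, neg_mul]
    field_simp
  calc ∫ x in (0:ℝ)..D, x ^ q * exp (-b * x ^ p)
      = ∫ x in (0:ℝ)..D, b ^ (-(q + 1) / p) * (1 / p) * ((g ∘ f) x * (b * (p * x ^ (p - 1)))) :=
        intervalIntegral.integral_congr_ae (Filter.Eventually.of_forall fun x hx =>
          hsubst x (by rw [uIoc_of_le hD] at hx; exact hx.1))
    _ = b ^ (-(q + 1) / p) * (1 / p) * ∫ u in f 0..f D, g u := by
        rw [intervalIntegral.integral_const_mul,
          intervalIntegral.integral_comp_mul_deriv_of_deriv_nonneg]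
        · exact (continuous_const.mul (continuous_rpow_const hp.le)).continuousOn
        · intro x hx
          rw [min_eq_left hD, max_eq_right hD] at hx
          exact (hasDerivAt_rpow_const (Or.inl hx.1.ne')).const_mul b
        · intro x hx
          rw [min_eq_left hD] at hx
          have hx_pow := rpow_pos_of_pos hx.1 (p - 1)
          positivity
    _ = b ^ (-(q + 1) / p) * (1 / p) * lowerGamma ((q + 1) / p) (b * D ^ p) := by
        simp [f, g, lowerGamma, zero_rpow hp.ne']

theorem ProbabilityTheory.IndepFun.measure_preimage_eq_lintegral {Ω α β : Type*}
    {_ : MeasurableSpace Ω} [MeasurableSpace α] [MeasurableSpace β] {μ : Measure Ω}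
    [IsFiniteMeasure μ] {f : Ω → α} {g : Ω → β} (h : IndepFun f g μ) (hf : Measurable f)
    (hg : Measurable g) {S : Set (α × β)} (hS : MeasurableSet S) :
    μ ((fun ω => (f ω, g ω)) ⁻¹' S) = ∫⁻ x, μ.map g (Prod.mk x ⁻¹' S) ∂μ.map f := by
  rw [← Measure.map_apply (hf.prodMk hg) hS,
    h.map_prod_eq_prod_map_map hf.aemeasurable hg.aemeasurable, Measure.prod_apply hS]

theorem measure_lt_mul_rpow_neg_eq_lintegral {Ω : Type*} {_ : MeasurableSpace Ω}
    {μ : Measure Ω} [IsFiniteMeasure μ] {d e : Ω → ℝ} (hd : Measurable d) (he : Measurable e)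
    (hindep : IndepFun d e μ)
    (hlaw_e : ∀ t : ℝ, 0 ≤ t → μ {ω | t < e ω} = ENNReal.ofReal (exp (-t)))
    (hd_pos : ∀ᵐ x ∂μ.map d, 0 < x) {z : ℝ} (hz : 0 ≤ z) (η : ℝ) :
    μ {ω | z < e ω * d ω ^ (-η)} = ∫⁻ x, ENNReal.ofReal (exp (-z * x ^ η)) ∂μ.map d := by
  let S : Set (ℝ × ℝ) := {p | z < p.2 * p.1 ^ (-η)}
  have hS : MeasurableSet S := measurableSet_lt measurable_const (by fun_prop)
  rw [show {ω | z < e ω * d ω ^ (-η)} = (fun ω => (d ω, e ω)) ⁻¹' S from rfl,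
    hindep.measure_preimage_eq_lintegral hd he hS]
  refine lintegral_congr_ae (hd_pos.mono fun x hx => ?_)
  dsimp only
  have hsection : Prod.mk x ⁻¹' S = Ioi (z * x ^ η) := by
    ext y
    have hxη : 0 < x ^ η := rpow_pos_of_pos hx η
    change z < y * x ^ (-η) ↔ z * x ^ η < y
    rw [rpow_neg hx.le, ← div_eq_mul_inv, lt_div_iff₀ hxη]
  rw [hsection, Measure.map_apply he measurableSet_Ioi, neg_mul]
  exact hlaw_e _ (by positivity)

theorem ae_lt_withDensity_ite_Icc {a b : ℝ} {ρ : ℝ → ℝ} (hρ : Measurable ρ) :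
    ∀ᵐ x ∂volume.withDensity (fun x => ENNReal.ofReal (if x ∈ Icc a b then ρ x else 0)),
      a < x := by
  have hdensity : Measurable fun x => ENNReal.ofReal (if x ∈ Icc a b then ρ x else 0) :=
    (Measurable.ite measurableSet_Icc hρ measurable_const).ennreal_ofReal
  rw [ae_withDensity_iff hdensity]
  filter_upwards [Measure.ae_ne volume a] with x hxa hρx
  have hx : x ∈ Icc a b := by
    by_contra hx
    simp [hx] at hρx
  exact lt_of_le_of_ne hx.1 hxa.symm

theorem lintegral_withDensity_ite_Icc {a b : ℝ} (hab : a ≤ b) {ρ φ : ℝ → ℝ}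
    (hρ : Continuous ρ) (hφ : Continuous φ) (hρ_nonneg : ∀ x ∈ Icc a b, 0 ≤ ρ x)
    (hφ_nonneg : ∀ x ∈ Icc a b, 0 ≤ φ x) :
    ∫⁻ x, ENNReal.ofReal (φ x)
        ∂volume.withDensity (fun x => ENNReal.ofReal (if x ∈ Icc a b then ρ x else 0)) =
      ENNReal.ofReal (∫ x in a..b, ρ x * φ x) := by
  have hmul : ∀ x, ENNReal.ofReal (if x ∈ Icc a b then ρ x else 0) * ENNReal.ofReal (φ x) =
      ENNReal.ofReal ((Icc a b).indicator (fun x => ρ x * φ x) x) := by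
    intro x
    by_cases hx : x ∈ Icc a b
    · simp only [hx, if_true, indicator_of_mem, ENNReal.ofReal_mul (hρ_nonneg x hx)]
    · simp [hx]
  have hdensity : Measurable fun x => ENNReal.ofReal (if x ∈ Icc a b then ρ x else 0) :=
    (Measurable.ite measurableSet_Icc hρ.measurable measurable_const).ennreal_ofReal
  rw [lintegral_withDensity_eq_lintegral_mul _ hdensity (by fun_prop)]
  have hint : Integrable ((Icc a b).indicator fun x => ρ x * φ x) :=
    (hρ.mul hφ).integrableOn_Icc.integrable_indicator measurableSet_Icc
  have hint_nonneg : 0 ≤ᵐ[volume] (Icc a b).indicator fun x => ρ x * φ x :=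
    Filter.Eventually.of_forall <|
      indicator_nonneg fun x hx => mul_nonneg (hρ_nonneg x hx) (hφ_nonneg x hx)
  simp only [Pi.mul_apply, hmul]
  rw [← ofReal_integral_eq_lintegral_ofReal hint hint_nonneg,
    integral_indicator measurableSet_Icc, integral_Icc_eq_integral_Ioc,
    intervalIntegral.integral_of_le hab]

-- The paper's density `f_{d_k}` of the distance to the `k`-th nearest of `K` users, on `[0, D]`.
noncomputable def distanceDensity (D : ℝ) (K k : ℕ) (x : ℝ) : ℝ :=
  2 * (k : ℝ) * (K.choose k : ℝ) *
    ∑ j ∈ Finset.range (K - k + 1),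
      ((K - k).choose j : ℝ) * (-1 : ℝ) ^ j * x ^ (2 * (k + j) - 1) / D ^ (2 * (k + j))

section distanceDensity

variable {D : ℝ} {K k : ℕ}

theorem distanceDensity_eq (hD : D ≠ 0) (hk : 1 ≤ k) (x : ℝ) :
    distanceDensity D K k x =
      2 * (k : ℝ) * (K.choose k : ℝ) *
        (x ^ (2 * k - 1) / D ^ (2 * k) * (1 - x ^ 2 / D ^ 2) ^ (K - k)) := by
  rw [distanceDensity, show 1 - x ^ 2 / D ^ 2 = -(x ^ 2 / D ^ 2) + 1 by ring, add_pow]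
  congr 1
  rw [Finset.mul_sum]
  refine Finset.sum_congr rfl fun j _ => ?_
  rw [show (2 * (k + j) - 1 : ℕ) = (2 * k - 1) + 2 * j by omega,
    show (2 * (k + j) : ℕ) = 2 * k + 2 * j by ring,
    neg_pow (x ^ 2 / D ^ 2), div_pow, ← pow_mul, ← pow_mul, pow_add, pow_add, one_pow, mul_one]
  field_simp

theorem distanceDensity_nonneg (hD : 0 < D) (hk : 1 ≤ k) {x : ℝ} (hx : x ∈ Icc 0 D) :
    0 ≤ distanceDensity D K k x := by
  have hx0 := hx.1
  have hfactor : 0 ≤ 1 - x ^ 2 / D ^ 2 :=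
    sub_nonneg.mpr <| (div_le_one (by positivity)).mpr (pow_le_pow_left₀ hx.1 hx.2 2)
  rw [distanceDensity_eq hD.ne' hk]
  positivity

theorem continuous_distanceDensity : Continuous (distanceDensity D K k) := by
  unfold distanceDensity
  fun_prop

theorem integral_distanceDensity_mul_exp_neg_mul_rpow (hD : 0 ≤ D) {η z : ℝ} (hη : 0 < η)
    (hz : 0 < z) (hk : 1 ≤ k) :
    ∫ x in (0:ℝ)..D, distanceDensity D K k x * exp (-z * x ^ η) =
      2 * (k : ℝ) * (K.choose k : ℝ) *
        ∑ j ∈ Finset.range (K - k + 1),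
          ((K - k).choose j : ℝ) * ((-1 : ℝ) ^ j / D ^ (2 * (k + j))) *
            (z ^ (-(2 * ((k : ℝ) + (j : ℝ))) / η) / η) *
            lowerGamma (2 * ((k : ℝ) + (j : ℝ)) / η) (z * D ^ η) := by
  have hmoment : ∀ j : ℕ, ∫ x in (0:ℝ)..D, x ^ (2 * (k + j) - 1) * exp (-z * x ^ η) =
      z ^ (-(2 * ((k : ℝ) + (j : ℝ))) / η) / η *
        lowerGamma (2 * ((k : ℝ) + (j : ℝ)) / η) (z * D ^ η) := by
    intro j
    have hexponent : ((2 * (k + j) - 1 : ℕ) : ℝ) + 1 = 2 * ((k : ℝ) + (j : ℝ)) := by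
      push_cast [Nat.cast_sub (by omega : 1 ≤ 2 * (k + j))]
      ring
    simp_rw [← rpow_natCast, intervalIntegral.integral_rpow_mul_exp_neg_mul_rpow hη hz hD,
      hexponent]
    ring
  have hη_nonneg := hη.le
  simp_rw [distanceDensity, Finset.mul_sum, Finset.sum_mul]
  rw [intervalIntegral.integral_finsetSum fun j _ => by
    apply Continuous.intervalIntegrable
    fun_prop]
  refine Finset.sum_congr rfl fun j _ => ?_
  calc _ = ∫ x in (0:ℝ)..D, 2 * (k : ℝ) * (K.choose k : ℝ) *
          (((K - k).choose j : ℝ) * (-1 : ℝ) ^ j / D ^ (2 * (k + j))) *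
            (x ^ (2 * (k + j) - 1) * exp (-z * x ^ η)) := by
        congr 1
        ext x
        ring
    _ = _ := by
        rw [intervalIntegral.integral_const_mul, hmoment j]
        ring

end distanceDensity

theorem ordered_channel_gain_cdf_general {Ω : Type*} [MeasurableSpace Ω]
    (μp : Measure Ω) [IsProbabilityMeasure μp]
    (D η z : ℝ) (hD : 0 < D) (hη : 0 < η) (hz : 0 < z)
    (K k : ℕ) (hk1 : 1 ≤ k)
    (d e : Ω → ℝ) (hd : Measurable d) (he : Measurable e)
    (hindep : IndepFun d e μp)
    (hlaw_d : Measure.map d μp =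
      volume.withDensity (fun x => ENNReal.ofReal
        (if x ∈ Icc 0 D then
          2 * (k : ℝ) * (K.choose k : ℝ) *
            ∑ j ∈ Finset.range (K - k + 1),
              ((K - k).choose j : ℝ) * (-1 : ℝ) ^ j * x ^ (2 * (k + j) - 1) / D ^ (2 * (k + j))
         else 0)))
    (hlaw_e : ∀ t : ℝ, 0 ≤ t → μp {ω | t < e ω} = ENNReal.ofReal (Real.exp (-t)))
    (α : Ω → ℝ) (hα : ∀ ω, α ω = e ω * d ω ^ (-η)) :
    μp {ω | α ω ≤ z} =
      ENNReal.ofReal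
        (1 - 2 * (k : ℝ) * (K.choose k : ℝ) *
          ∑ j ∈ Finset.range (K - k + 1),
            ((K - k).choose j : ℝ) * ((-1 : ℝ) ^ j / D ^ (2 * (k + j))) *
              (z ^ (-(2 * ((k : ℝ) + (j : ℝ))) / η) / η) *
              lowerGamma (2 * ((k : ℝ) + (j : ℝ)) / η) (z * D ^ η)) := by
  have hlaw : μp.map d = volume.withDensity
      (fun x => ENNReal.ofReal (if x ∈ Icc 0 D then distanceDensity D K k x else 0)) := hlaw_d
  have hd_pos : ∀ᵐ x ∂μp.map d, 0 < x :=
    hlaw ▸ ae_lt_withDensity_ite_Icc continuous_distanceDensity.measurable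
  have hexp_nonneg : ∀ x, 0 ≤ exp (-z * x ^ η) := fun x => (exp_pos _).le
  have htail : μp {ω | z < e ω * d ω ^ (-η)} =
      ENNReal.ofReal (∫ x in (0:ℝ)..D, distanceDensity D K k x * exp (-z * x ^ η)) := by
    have hη_nonneg := hη.le
    rw [measure_lt_mul_rpow_neg_eq_lintegral hd he hindep hlaw_e hd_pos hz.le, hlaw,
      lintegral_withDensity_ite_Icc hD.le continuous_distanceDensity (by fun_prop)
        (fun x hx => distanceDensity_nonneg hD hk1 hx) (fun x _ => hexp_nonneg x)]
  have htail_nonneg : 0 ≤ ∫ x in (0:ℝ)..D, distanceDensity D K k x * exp (-z * x ^ η) :=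
    intervalIntegral.integral_nonneg hD.le fun x hx =>
      mul_nonneg (distanceDensity_nonneg hD hk1 hx) (hexp_nonneg x)
  have hcompl : {ω | α ω ≤ z} = {ω | z < e ω * d ω ^ (-η)}ᶜ := by
    ext ω
    simp [hα]
  rw [hcompl, prob_compl_eq_one_sub (measurableSet_lt measurable_const (by fun_prop)), htail,
    ← ENNReal.ofReal_one, ← ENNReal.ofReal_sub _ htail_nonneg,
    integral_distanceDensity_mul_exp_neg_mul_rpow hD.le hη hz hk1]

/-- if `d_k` has the `k`-th distance-order-statistic density on `[0,D]`
and, conditionally on `d_k = x`, `α_k` is exponential with mean `x^(−η)`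
(i.e. `α_k = e · d_k^(−η)` with `e ~ Exp(1)` independent of `d_k`), then for `z > 0`,
`P(α_k ≤ z) = 1 − 2k C(K,k) Σ_{j=0}^{K−k} C(K−k,j) ((−1)^j/D^(2(k+j)))
  (z^(−2(k+j)/η)/η) γ(2(k+j)/η, z D^η)`. -/
theorem ordered_channel_gain_cdf {Ω : Type*} [MeasurableSpace Ω]
    (μp : Measure Ω) [IsProbabilityMeasure μp]
    (D η z : ℝ) (hD : 0 < D) (hη : 0 < η) (hz : 0 < z)
    (K k : ℕ) (hk1 : 1 ≤ k) (hk2 : k ≤ K)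
    (d e : Ω → ℝ) (hd : Measurable d) (he : Measurable e)
    (hindep : IndepFun d e μp)
    (hlaw_d : Measure.map d μp =
      volume.withDensity (fun x => ENNReal.ofReal
        (if x ∈ Icc 0 D then
          2 * (k : ℝ) * (K.choose k : ℝ) *
            ∑ j ∈ Finset.range (K - k + 1),
              ((K - k).choose j : ℝ) * (-1 : ℝ) ^ j * x ^ (2 * (k + j) - 1) / D ^ (2 * (k + j))
         else 0)))
    (hlaw_e : ∀ t : ℝ, 0 ≤ t → μp {ω | t < e ω} = ENNReal.ofReal (Real.exp (-t)))
    (α : Ω → ℝ) (hα : ∀ ω, α ω = e ω * d ω ^ (-η)) :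
    μp {ω | α ω ≤ z} =
      ENNReal.ofReal
        (1 - 2 * (k : ℝ) * (K.choose k : ℝ) *
          ∑ j ∈ Finset.range (K - k + 1),
            ((K - k).choose j : ℝ) * ((-1 : ℝ) ^ j / D ^ (2 * (k + j))) *
              (z ^ (-(2 * ((k : ℝ) + (j : ℝ))) / η) / η) *
              lowerGamma (2 * ((k : ℝ) + (j : ℝ)) / η) (z * D ^ η)) :=
  ordered_channel_gain_cdf_general μp D η z hD hη hz K k hk1 d e hd he hindep hlaw_d hlaw_e α hα
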